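/- arXiv:1412.0783 — 7 statements merged into one kernel-verified Lean document; each statement's English description precedes it below -/
import Mathlib

section
/- Variance formula for digitally shifted digital nets: for a subgroup P of a finite abelian group G and F : G → ℝ, the variance over uniform random shift σ ∈ G of the estimator I_{P+σ}(F) equals ∑_{h ∈ P^⊥ \ {0}} |F̂(h)|², i.e. |G|^{-1} ∑_{σ∈G} (I_{P+σ}(F) − I(F))² = ∑_{h ∈ P^⊥, h ≠ trivial} |F̂(h)|². -/
/-!
By Fourier inversion `F = ∑ ψ, F̂ ψ * conj ψ`, and the mean of a character over `P` is `1` on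
`P^⊥` and `0` off it; hence `I_{P+σ}(F) = ∑ ψ ∈ P^⊥, F̂ ψ * conj (ψ σ)`. The trivial character
contributes `F̂ 1 = I(F)`, so the error `I_{P+σ}(F) - I(F)` is a trigonometric polynomial in `σ`
with frequencies in `P^⊥ \ {1}`, and orthogonality of characters (Parseval) turns its mean square
into `∑ ψ ∈ P^⊥ \ {1}, ‖F̂ ψ‖ ^ 2`.
-/

open scoped Classical

open Finset ComplexConjugate

namespace AddChar

variable {G : Type*} [AddCommGroup G] [Fintype G]

noncomputable def annihilator (P : AddSubgroup G) : Finset (AddChar G ℂ) :=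
  univ.filter fun ψ => ∀ g ∈ P, ψ g = 1

lemma mem_annihilator {P : AddSubgroup G} {ψ : AddChar G ℂ} :
    ψ ∈ annihilator P ↔ ∀ g ∈ P, ψ g = 1 := by
  simp [annihilator]

lemma one_mem_annihilator (P : AddSubgroup G) : 1 ∈ annihilator P :=
  mem_annihilator.2 fun _ _ => rfl

noncomputable def fourierCoeff (F : G → ℂ) (ψ : AddChar G ℂ) : ℂ :=
  1 / (Fintype.card G : ℂ) * ∑ g, F g * ψ g

lemma fourierCoeff_one (F : G → ℂ) :
    fourierCoeff F 1 = 1 / (Fintype.card G : ℂ) * ∑ g, F g := by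
  simp [fourierCoeff]

lemma sum_subgroup_eq_ite (P : AddSubgroup G) (ψ : AddChar G ℂ) :
    ∑ g ∈ univ.filter (· ∈ P), ψ g =
      if ψ ∈ annihilator P then ((univ.filter (· ∈ P)).card : ℂ) else 0 := by
  have hrestrict : ψ.compAddMonoidHom P.subtype = 0 ↔ ψ ∈ annihilator P := by
    simp [mem_annihilator, AddChar.ext_iff]
  rw [sum_subtype (p := (· ∈ P)) _ (fun _ => by simp), ← Fintype.card_subtype]
  simpa [hrestrict] using sum_eq_ite (ψ.compAddMonoidHom P.subtype)

lemma sum_mul_conj_eq_ite (ψ φ : AddChar G ℂ) :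
    ∑ a, ψ a * conj (φ a) = if ψ = φ then (Fintype.card G : ℂ) else 0 := by
  have hprod : ∀ a, ψ a * conj (φ a) = (ψ * φ⁻¹) a := fun a => by
    rw [mul_apply, inv_apply, map_neg_eq_conj]
  have htrivial : ψ * φ⁻¹ = 0 ↔ ψ = φ := mul_inv_eq_one
  simp_rw [hprod, sum_eq_ite, htrivial]

lemma sum_fourierCoeff_mul_conj (F : G → ℂ) (x : G) :
    ∑ ψ, fourierCoeff F ψ * conj (ψ x) = F x := by
  have hN : (Fintype.card G : ℂ) ≠ 0 := Nat.cast_ne_zero.2 Fintype.card_ne_zero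
  calc ∑ ψ, fourierCoeff F ψ * conj (ψ x)
      = 1 / (Fintype.card G : ℂ) * ∑ g, F g * ∑ ψ : AddChar G ℂ, ψ (g - x) := by
        simp_rw [fourierCoeff, mul_sum, sum_mul, sub_eq_add_neg, map_add_eq_mul,
          map_neg_eq_conj]
        rw [sum_comm]
        simp only [mul_assoc]
    _ = F x := by
        simp_rw [sum_apply_eq_ite, sub_eq_zero, mul_ite, mul_zero, sum_ite_eq', mem_univ, if_true]
        field_simp

lemma subgroup_average_eq_sum_annihilator (P : AddSubgroup G) (F : G → ℂ) (σ : G) :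
    1 / ((univ.filter (· ∈ P)).card : ℂ) * ∑ p ∈ univ.filter (· ∈ P), F (p + σ) =
      ∑ ψ ∈ annihilator P, fourierCoeff F ψ * conj (ψ σ) := by
  have hM : ((univ.filter (· ∈ P)).card : ℂ) ≠ 0 :=
    Nat.cast_ne_zero.2 (card_ne_zero_of_mem (a := 0) (by simp))
  have hmean : ∀ ψ : AddChar G ℂ, 1 / ((univ.filter (· ∈ P)).card : ℂ) *
      ∑ p ∈ univ.filter (· ∈ P), conj (ψ p) = if ψ ∈ annihilator P then 1 else 0 := by
    intro ψ
    rw [← map_sum, sum_subgroup_eq_ite]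
    split_ifs <;> simp [hM]
  calc 1 / ((univ.filter (· ∈ P)).card : ℂ) * ∑ p ∈ univ.filter (· ∈ P), F (p + σ)
      = ∑ ψ, fourierCoeff F ψ * conj (ψ σ) * (1 / ((univ.filter (· ∈ P)).card : ℂ) *
          ∑ p ∈ univ.filter (· ∈ P), conj (ψ p)) := by
        simp_rw [← sum_fourierCoeff_mul_conj F, map_add_eq_mul, map_mul, mul_sum]
        rw [sum_comm]
        simp only [mul_comm, mul_left_comm]
    _ = ∑ ψ ∈ annihilator P, fourierCoeff F ψ * conj (ψ σ) := by
        simp_rw [hmean, mul_ite, mul_one, mul_zero, sum_ite_mem, univ_inter]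

lemma parseval (S : Finset (AddChar G ℂ)) (c : AddChar G ℂ → ℂ) :
    1 / (Fintype.card G : ℝ) * ∑ a, ‖∑ ψ ∈ S, c ψ * conj (ψ a)‖ ^ 2 =
      ∑ ψ ∈ S, ‖c ψ‖ ^ 2 := by
  have hN : (Fintype.card G : ℂ) ≠ 0 := Nat.cast_ne_zero.2 Fintype.card_ne_zero
  have hsq : ∀ z : ℂ, (‖z‖ : ℂ) ^ 2 = z * conj z := fun z => by
    rw [Complex.mul_conj, ← Complex.ofReal_pow, Complex.sq_norm]
  have hortho : ∀ ψ φ : AddChar G ℂ,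
      1 / (Fintype.card G : ℂ) * ∑ a, φ a * conj (ψ a) = if φ = ψ then 1 else 0 := by
    intro ψ φ
    rw [sum_mul_conj_eq_ite]
    split_ifs <;> simp [hN]
  apply Complex.ofReal_injective
  push_cast
  simp_rw [hsq, map_sum, map_mul, Complex.conj_conj, sum_mul_sum, sum_comm (s := univ)]
  calc 1 / (Fintype.card G : ℂ) * ∑ ψ ∈ S, ∑ φ ∈ S, ∑ a, c ψ * conj (ψ a) * (conj (c φ) * φ a)
      = ∑ ψ ∈ S, ∑ φ ∈ S, c ψ * conj (c φ) *
          (1 / (Fintype.card G : ℂ) * ∑ a, φ a * conj (ψ a)) := by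
        simp_rw [mul_sum]
        congr! 3 with ψ _ φ _ a
        ring
    _ = ∑ ψ ∈ S, c ψ * conj (c ψ) := by
        simp_rw [hortho, mul_ite, mul_one, mul_zero]
        exact sum_congr rfl fun ψ hψ => by rw [sum_ite_eq', if_pos hψ]

end AddChar

open Finset ComplexConjugate AddChar in
/-- Variance formula over digital shifts: the mean square QMC error equals the sum
of the squared absolute values of the nontrivial discrete Fourier coefficients
supported on `P^⊥`. -/
theorem variance_digital_shift {G : Type*} [AddCommGroup G] [Fintype G]
    [Fintype (AddChar G ℂ)] (P : AddSubgroup G) (F : G → ℝ) :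
    (1 / (Fintype.card G : ℝ)) *
        ∑ σ : G,
          ((1 / ((Finset.univ.filter (· ∈ P)).card : ℝ)) *
              (∑ g ∈ Finset.univ.filter (· ∈ P), F (g + σ)) -
            (1 / (Fintype.card G : ℝ)) * ∑ g : G, F g) ^ 2
      = ∑ h ∈ Finset.univ.filter
            (fun h : AddChar G ℂ => (∀ g ∈ P, h g = 1) ∧ h ≠ 1),
          ‖(1 / (Fintype.card G : ℂ)) * ∑ g : G, (F g : ℂ) * h g‖ ^ 2 := by
  obtain rfl : ‹Fintype (AddChar G ℂ)› = AddChar.instFintype G ℂ := Subsingleton.elim _ _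
  have hdeviation : ∀ σ : G,
      ((1 / ((univ.filter (· ∈ P)).card : ℝ)) * ∑ g ∈ univ.filter (· ∈ P), F (g + σ) -
          (1 / (Fintype.card G : ℝ)) * ∑ g, F g) ^ 2 =
        ‖∑ ψ ∈ (annihilator P).erase 1,
            fourierCoeff (fun g => (F g : ℂ)) ψ * conj (ψ σ)‖ ^ 2 := by
    intro σ
    rw [sum_erase_eq_sub (one_mem_annihilator P), ← subgroup_average_eq_sum_annihilator,
      one_apply, map_one, mul_one, fourierCoeff_one, ← sq_abs, ← Real.norm_eq_abs,
      ← Complex.norm_real]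
    push_cast
    rfl
  have hnontrivial : univ.filter (fun h : AddChar G ℂ => (∀ g ∈ P, h g = 1) ∧ h ≠ 1) =
      (annihilator P).erase 1 := by
    ext ψ
    simp [mem_annihilator, and_comm]
  rw [sum_congr rfl fun σ _ => hdeviation σ, parseval, hnontrivial]
  rfl
end

section
/- Koksma–Hlawka type inequality for the root mean square error: if P ⊆ ℤ_b^{s×n} is a subgroup and F : ℤ_b^{s×n} → ℝ satisfies |F̂(A)| ≤ C · b^{−μ(A)} for all A ∈ ℤ_b^{s×n}, then sqrt(Var_{σ}[I_{P+σ}(F)]) ≤ C · W(P;μ), where W(P;μ) = sqrt(∑_{A ∈ P^⊥\{0}} b^{−2μ(A)}). -/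
open scoped Classical

open Finset

/-!
Pairing matrices by `χ_A(B) = ω_b ^ ∑ a_{ij} b_{ij}` identifies `ℤ_b^{s×n}` with its own dual.
Translating `F` by `B` multiplies `F̂(A)` by `χ_A(-B)`, and averaging these factors over `B ∈ P`
gives the indicator of `P^⊥`; so `σ ↦ I_{P+σ}(F) - I(F)` has Fourier coefficients
`F̂(A) · 1[A ∈ P^⊥ \ {0}]`. By Parseval its mean square is `∑_{A ∈ P^⊥ \ {0}} |F̂(A)|²`,
and each term is at most `C² b^{-2μ(A)}`.
-/

theorem Real.sqrt_sum_sq_le_mul_sqrt_sum_sq {ι : Type*} (s : Finset ι) {f w : ι → ℝ} {C : ℝ}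
    (hC : 0 ≤ C) (hf : ∀ i ∈ s, 0 ≤ f i) (hfw : ∀ i ∈ s, f i ≤ C * w i) :
    √(∑ i ∈ s, f i ^ 2) ≤ C * √(∑ i ∈ s, w i ^ 2) := by
  rw [← Real.sqrt_sq hC, ← Real.sqrt_mul (sq_nonneg C), Finset.mul_sum]
  refine Real.sqrt_le_sqrt (Finset.sum_le_sum fun i hi => ?_)
  rw [← mul_pow]
  exact pow_le_pow_left₀ (hf i hi) (hfw i hi) 2

theorem AddChar.sum_filter_mem {G R : Type*} [AddCommGroup G] [Fintype G] [CommRing R]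
    [IsDomain R] (ψ : AddChar G R) (P : AddSubgroup G) :
    ∑ B ∈ univ.filter (· ∈ P), ψ B =
      if ∀ B ∈ P, ψ B = 1 then ((univ.filter (· ∈ P)).card : R) else 0 := by
  have hrestrict : ∑ B ∈ univ.filter (· ∈ P), ψ B = ∑ B : P, ψ.compAddMonoidHom P.subtype B :=
    Finset.sum_subtype _ (by simp) ψ
  have htriv : ψ.compAddMonoidHom P.subtype = 0 ↔ ∀ B ∈ P, ψ B = 1 := by
    simp [AddChar.eq_zero_iff]
  rw [hrestrict, AddChar.sum_eq_ite, Fintype.card_subtype]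
  simp only [htriv]

namespace PairingFourier

variable {G : Type*} [AddCommGroup G] (χ : G →+ AddChar G ℂ)

def annihilator (P : AddSubgroup G) : AddSubgroup G where
  carrier := {A | ∀ B ∈ P, χ A B = 1}
  zero_mem' := by simp
  add_mem' {A A'} hA hA' B hB := by simp [hA B hB, hA' B hB]
  neg_mem' {A} hA B hB := by simp [AddChar.map_neg_eq_inv, hA B hB]

theorem mem_annihilator {P : AddSubgroup G} {A : G} :
    A ∈ annihilator χ P ↔ ∀ B ∈ P, χ A B = 1 := Iff.rfl

variable [Fintype G]

noncomputable def dft : (G → ℂ) →ₗ[ℂ] G → ℂ where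
  toFun g A := 1 / (Fintype.card G : ℂ) * ∑ B, g B * χ A B
  map_add' g h := by ext A; simp [add_mul, Finset.sum_add_distrib, mul_add]
  map_smul' c g := by ext A; simp [Finset.mul_sum, mul_assoc, mul_left_comm]

theorem dft_apply (g : G → ℂ) (A : G) :
    dft χ g A = 1 / (Fintype.card G : ℂ) * ∑ B, g B * χ A B := rfl

noncomputable def mean (F : G → ℝ) : ℝ :=
  1 / (Fintype.card G : ℝ) * ∑ B, F B

noncomputable def cosetMean (P : AddSubgroup G) (F : G → ℝ) (σ : G) : ℝ :=
  1 / ((Finset.univ.filter (· ∈ P)).card : ℝ) * ∑ B ∈ Finset.univ.filter (· ∈ P), F (B + σ)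

variable {χ}

theorem sum_apply_eq_ite (hχ : Function.Injective χ) (A : G) :
    ∑ B, χ A B = if A = 0 then (Fintype.card G : ℂ) else 0 := by
  rw [AddChar.sum_eq_ite]
  simp only [map_eq_zero_iff χ hχ]

theorem sum_apply_mul_conj (hsymm : ∀ A B, χ A B = χ B A) (hχ : Function.Injective χ)
    (B B' : G) :
    ∑ A, χ A B * starRingEnd ℂ (χ A B') = if B = B' then (Fintype.card G : ℂ) else 0 := by
  have h : ∀ A, χ A B * starRingEnd ℂ (χ A B') = χ (B - B') A := fun A => by
    rw [← AddChar.map_neg_eq_conj, ← AddChar.map_add_eq_mul, ← sub_eq_add_neg, hsymm]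
  simp only [h, sum_apply_eq_ite hχ, sub_eq_zero]

theorem sum_norm_sq_dft (hsymm : ∀ A B, χ A B = χ B A) (hχ : Function.Injective χ)
    (g : G → ℂ) :
    ∑ A, ‖dft χ g A‖ ^ 2 = 1 / (Fintype.card G : ℝ) * ∑ B, ‖g B‖ ^ 2 := by
  apply Complex.ofReal_injective
  push_cast
  simp_rw [← Complex.mul_conj']
  have hA : ∀ A, dft χ g A * starRingEnd ℂ (dft χ g A) = (1 / (Fintype.card G : ℂ)) ^ 2 *
      ∑ B, ∑ B', g B * starRingEnd ℂ (g B') * (χ A B * starRingEnd ℂ (χ A B')) := fun A => by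
    simp only [dft_apply, map_mul, map_sum, map_div₀, map_one, map_natCast]
    rw [mul_mul_mul_comm, Finset.sum_mul_sum, ← sq]
    congr 1
    exact Finset.sum_congr rfl fun B _ => Finset.sum_congr rfl fun B' _ => by ring
  calc ∑ A, dft χ g A * starRingEnd ℂ (dft χ g A)
      = (1 / (Fintype.card G : ℂ)) ^ 2 * ∑ B, ∑ B', g B * starRingEnd ℂ (g B') *
          ∑ A, χ A B * starRingEnd ℂ (χ A B') := by
        simp only [hA, Finset.mul_sum]
        rw [Finset.sum_comm]
        exact Finset.sum_congr rfl fun B _ => Finset.sum_comm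
    _ = 1 / (Fintype.card G : ℂ) * ∑ B, g B * starRingEnd ℂ (g B) := by
        simp only [sum_apply_mul_conj hsymm hχ, mul_ite, mul_zero, Finset.sum_ite_eq,
          Finset.mem_univ, if_true, ← Finset.sum_mul]
        field_simp

theorem dft_const (hχ : Function.Injective χ) (c : ℂ) (A : G) :
    dft χ (fun _ => c) A = if A = 0 then c else 0 := by
  rw [dft_apply, ← Finset.mul_sum, sum_apply_eq_ite hχ]
  split_ifs
  · field_simp
  · simp

theorem dft_comp_add_left (g : G → ℂ) (B A : G) :
    dft χ (fun σ => g (B + σ)) A = χ A (-B) * dft χ g A := by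
  have hshift : ∀ σ, g (B + σ) * χ A σ = χ A (-B) * (g (B + σ) * χ A (B + σ)) := fun σ => by
    rw [mul_left_comm, ← AddChar.map_add_eq_mul, neg_add_cancel_left]
  have hreindex : ∑ σ, g (B + σ) * χ A (B + σ) = ∑ τ, g τ * χ A τ :=
    Equiv.sum_comp (Equiv.addLeft B) fun τ => g τ * χ A τ
  rw [dft_apply, dft_apply, Finset.sum_congr rfl fun σ _ => hshift σ, ← Finset.mul_sum, hreindex]
  ring

theorem dft_cosetMean (P : AddSubgroup G) (F : G → ℝ) (A : G) :
    dft χ (fun σ => (cosetMean P F σ : ℂ)) A =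
      if A ∈ annihilator χ P then dft χ (fun B => (F B : ℂ)) A else 0 := by
  set S := univ.filter (· ∈ P)
  have hS : (S.card : ℂ) ≠ 0 := Nat.cast_ne_zero.2 (Finset.card_ne_zero.2 ⟨0, by simp [S]⟩)
  have hcoset : (fun σ => (cosetMean P F σ : ℂ)) =
      (1 / (S.card : ℂ)) • ∑ B ∈ S, fun σ => (F (B + σ) : ℂ) := by
    ext σ
    simp [cosetMean, S, Finset.sum_apply]
  have hchar : ∑ B ∈ S, χ A (-B) = if A ∈ annihilator χ P then (S.card : ℂ) else 0 := by
    simp only [← AddChar.neg_apply, ← map_neg, AddChar.sum_filter_mem, S]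
    simp only [← mem_annihilator, neg_mem_iff]
  simp only [hcoset, map_smul, map_sum, Pi.smul_apply, Finset.sum_apply, smul_eq_mul,
    dft_comp_add_left (χ := χ) (fun τ => (F τ : ℂ)), ← Finset.sum_mul, hchar]
  split_ifs
  · field_simp
  · simp

theorem dft_zero (F : G → ℝ) : dft χ (fun B => (F B : ℂ)) 0 = mean F := by
  simp [dft_apply, mean]

theorem mean_sq_cosetMean_sub_mean (hsymm : ∀ A B, χ A B = χ B A) (hχ : Function.Injective χ)
    (P : AddSubgroup G) (F : G → ℝ) :
    1 / (Fintype.card G : ℝ) * ∑ σ, (cosetMean P F σ - mean F) ^ 2 =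
      ∑ A ∈ univ.filter (fun A => A ∈ annihilator χ P ∧ A ≠ 0),
        ‖dft χ (fun B => (F B : ℂ)) A‖ ^ 2 := by
  have hdiff : ∀ A, dft χ (fun σ => ((cosetMean P F σ - mean F : ℝ) : ℂ)) A =
      if A ∈ annihilator χ P ∧ A ≠ 0 then dft χ (fun B => (F B : ℂ)) A else 0 := fun A => by
    have hsplit : (fun σ => ((cosetMean P F σ - mean F : ℝ) : ℂ)) =
        (fun σ => (cosetMean P F σ : ℂ)) - fun _ => (mean F : ℂ) := by
      ext σ; push_cast; rfl
    rw [hsplit, map_sub, Pi.sub_apply, dft_cosetMean, dft_const hχ]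
    by_cases hA : A = 0
    · simp [hA, dft_zero, (annihilator χ P).zero_mem]
    · simp [hA]
  have hparseval := sum_norm_sq_dft hsymm hχ fun σ => ((cosetMean P F σ - mean F : ℝ) : ℂ)
  simp only [hdiff, Complex.norm_real, Real.norm_eq_abs, sq_abs] at hparseval
  rw [← hparseval, Finset.sum_filter]
  exact Finset.sum_congr rfl fun A _ => by split_ifs <;> simp

theorem sqrt_mean_sq_cosetMean_sub_mean_le (hsymm : ∀ A B, χ A B = χ B A)
    (hχ : Function.Injective χ) (P : AddSubgroup G) (F : G → ℝ) {C : ℝ} {w : G → ℝ}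
    (hC : 0 ≤ C) (hF : ∀ A, ‖dft χ (fun B => (F B : ℂ)) A‖ ≤ C * w A) :
    √(1 / (Fintype.card G : ℝ) * ∑ σ, (cosetMean P F σ - mean F) ^ 2) ≤
      C * √(∑ A ∈ univ.filter (fun A => A ∈ annihilator χ P ∧ A ≠ 0), w A ^ 2) := by
  rw [mean_sq_cosetMean_sub_mean hsymm hχ]
  exact Real.sqrt_sum_sq_le_mul_sqrt_sum_sq _ hC (fun _ _ => norm_nonneg _) fun A _ => hF A

end PairingFourier

section FrobeniusPairing

variable {m n R M : Type*} [Fintype m] [Fintype n] [CommRing R] [CommMonoid M]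

def frobeniusChar (ψ : AddChar R M) : Matrix m n R →+ AddChar (Matrix m n R) M where
  toFun A :=
    { toFun := fun B => ψ (∑ i, ∑ j, A i j * B i j)
      map_zero_eq_one' := by simp
      map_add_eq_mul' := fun B B' => by
        simp [mul_add, Finset.sum_add_distrib, AddChar.map_add_eq_mul] }
  map_zero' := by ext; simp
  map_add' A A' := by ext B; simp [add_mul, Finset.sum_add_distrib, AddChar.map_add_eq_mul]

theorem frobeniusChar_apply (ψ : AddChar R M) (A B : Matrix m n R) :
    frobeniusChar ψ A B = ψ (∑ i, ∑ j, A i j * B i j) := rfl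

theorem frobeniusChar_comm (ψ : AddChar R M) (A B : Matrix m n R) :
    frobeniusChar ψ A B = frobeniusChar ψ B A := by
  simp only [frobeniusChar_apply, mul_comm]

-- Pairing `A` with the matrix units `Matrix.single i j r` recovers the shifts `ψ.mulShift (A i j)`.
theorem frobeniusChar_injective {ψ : AddChar R M} (hψ : ψ.IsPrimitive) :
    Function.Injective (frobeniusChar ψ : Matrix m n R → AddChar (Matrix m n R) M) := by
  refine (injective_iff_map_eq_zero _).2 fun A hA => ?_
  ext i j
  by_contra hij
  refine hψ hij (DFunLike.ext _ _ fun r => ?_)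
  simpa [frobeniusChar_apply, Matrix.single_apply, ite_and] using
    DFunLike.congr_fun hA (Matrix.single i j r)

end FrobeniusPairing

theorem cexp_pow_eq_stdAddChar (b : ℕ) [NeZero b] (k : ℕ) :
    Complex.exp (2 * Real.pi * Complex.I / b) ^ k = ZMod.stdAddChar (k : ZMod b) := by
  have hcoe := ZMod.stdAddChar_coe (N := b) k
  push_cast at hcoe
  rw [hcoe, ← Complex.exp_nat_mul]
  ring_nf

open PairingFourier in
theorem koksma_hlawka_rmse_general (b s n : ℕ) [NeZero b]
    (P : AddSubgroup (Matrix (Fin s) (Fin n) (ZMod b)))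
    (F : Matrix (Fin s) (Fin n) (ZMod b) → ℝ) (C : ℝ)
    (hF : ∀ A : Matrix (Fin s) (Fin n) (ZMod b),
      ‖((1 / (Fintype.card (Matrix (Fin s) (Fin n) (ZMod b)) : ℂ)) *
            ∑ B : Matrix (Fin s) (Fin n) (ZMod b), (F B : ℂ) *
              Complex.exp (2 * Real.pi * Complex.I / b) ^
                (∑ i : Fin s, ∑ j : Fin n, (A i j).val * (B i j).val))‖
        ≤ C * (b : ℝ) ^
            (-(∑ i : Fin s, ∑ j : Fin n,
                ((j : ℕ) + 1 : ℤ) * (if A i j = 0 then 0 else 1)))) :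
    Real.sqrt
        ((1 / (Fintype.card (Matrix (Fin s) (Fin n) (ZMod b)) : ℝ)) *
          ∑ σ : Matrix (Fin s) (Fin n) (ZMod b),
            ((1 / ((Finset.univ.filter (· ∈ P)).card : ℝ)) *
                (∑ B ∈ Finset.univ.filter (· ∈ P), F (B + σ)) -
              (1 / (Fintype.card (Matrix (Fin s) (Fin n) (ZMod b)) : ℝ)) *
                ∑ B : Matrix (Fin s) (Fin n) (ZMod b), F B) ^ 2)
      ≤ C *
        Real.sqrt
          (∑ A ∈ Finset.univ.filter
              (fun A : Matrix (Fin s) (Fin n) (ZMod b) =>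
                (∀ B ∈ P,
                  Complex.exp (2 * Real.pi * Complex.I / b) ^
                    (∑ i : Fin s, ∑ j : Fin n, (A i j).val * (B i j).val) = 1) ∧ A ≠ 0),
            (b : ℝ) ^
              (-2 * ∑ i : Fin s, ∑ j : Fin n,
                ((j : ℕ) + 1 : ℤ) * (if A i j = 0 then 0 else 1))) := by
  have hpow : ∀ A B : Matrix (Fin s) (Fin n) (ZMod b),
      Complex.exp (2 * Real.pi * Complex.I / b) ^ (∑ i, ∑ j, (A i j).val * (B i j).val) =
        frobeniusChar ZMod.stdAddChar A B := fun A B => by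
    rw [cexp_pow_eq_stdAddChar, frobeniusChar_apply]
    push_cast
    simp [ZMod.natCast_val]
  simp only [hpow, ← dft_apply] at hF ⊢
  have hC : 0 ≤ C := by simpa using (norm_nonneg _).trans (hF 0)
  have hrmse := sqrt_mean_sq_cosetMean_sub_mean_le (frobeniusChar_comm ZMod.stdAddChar)
    (frobeniusChar_injective (ZMod.isPrimitive_stdAddChar b)) P F hC hF
  unfold cosetMean mean at hrmse
  refine hrmse.trans_eq ?_
  simp_rw [mem_annihilator, ← zpow_natCast, ← zpow_mul]
  ring_nf

/-- Koksma–Hlawka type inequality for the root mean square error: if the discrete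
Fourier coefficients of `F` satisfy `|F̂(A)| ≤ C b^{−μ(A)}` with the Dick weight `μ`,
then `sqrt(Var_σ[I_{P+σ}(F)]) ≤ C · W(P;μ)`. -/
theorem koksma_hlawka_rmse (b s n : ℕ) (hb : 2 ≤ b) [NeZero b]
    (P : AddSubgroup (Matrix (Fin s) (Fin n) (ZMod b)))
    (F : Matrix (Fin s) (Fin n) (ZMod b) → ℝ) (C : ℝ)
    (hF : ∀ A : Matrix (Fin s) (Fin n) (ZMod b),
      ‖((1 / (Fintype.card (Matrix (Fin s) (Fin n) (ZMod b)) : ℂ)) *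
            ∑ B : Matrix (Fin s) (Fin n) (ZMod b), (F B : ℂ) *
              Complex.exp (2 * Real.pi * Complex.I / b) ^
                (∑ i : Fin s, ∑ j : Fin n, (A i j).val * (B i j).val))‖
        ≤ C * (b : ℝ) ^
            (-(∑ i : Fin s, ∑ j : Fin n,
                ((j : ℕ) + 1 : ℤ) * (if A i j = 0 then 0 else 1)))) :
    Real.sqrt
        ((1 / (Fintype.card (Matrix (Fin s) (Fin n) (ZMod b)) : ℝ)) *
          ∑ σ : Matrix (Fin s) (Fin n) (ZMod b),
            ((1 / ((Finset.univ.filter (· ∈ P)).card : ℝ)) *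
                (∑ B ∈ Finset.univ.filter (· ∈ P), F (B + σ)) -
              (1 / (Fintype.card (Matrix (Fin s) (Fin n) (ZMod b)) : ℝ)) *
                ∑ B : Matrix (Fin s) (Fin n) (ZMod b), F B) ^ 2)
      ≤ C *
        Real.sqrt
          (∑ A ∈ Finset.univ.filter
              (fun A : Matrix (Fin s) (Fin n) (ZMod b) =>
                (∀ B ∈ P,
                  Complex.exp (2 * Real.pi * Complex.I / b) ^
                    (∑ i : Fin s, ∑ j : Fin n, (A i j).val * (B i j).val) = 1) ∧ A ≠ 0),
            (b : ℝ) ^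
              (-2 * ∑ i : Fin s, ∑ j : Fin n,
                ((j : ℕ) + 1 : ℤ) * (if A i j = 0 then 0 else 1))) :=
  koksma_hlawka_rmse_general b s n P F C hF
end

section
/- MacWilliams-type inversion formula for the weighted figure of merit: for a subgroup P ⊆ ℤ_b^{s×n} and real weights ν_{i,j}, one has ∑_{A ∈ P^⊥\{0}} b^{−2ν(A)} = −1 + |P|^{-1} ∑_{B ∈ P} ∏_{i,j} (1 + η(b_{i,j}) b^{−2ν_{i,j}}), where ν(A) = ∑_{i,j} ν_{i,j} δ(a_{i,j}), η(0) = b−1, and η(c) = −1 for c ≠ 0. -/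
/-!
Poisson summation over `P`: expanding each factor `1 + η(c) X` as the one-dimensional Fourier
transform `∑_a ψ(a c) w(a)` of the weight `w(0) = 1`, `w(a) = X`, the summand on the right becomes
`∑_A (A • B) b^{-2ν(A)}`. Summing over `B ∈ P` and using orthogonality of characters on `P`
leaves `|P| ∑_{A ∈ P^⊥} b^{-2ν(A)}`, and the term `A = 0` accounts for the `-1`.
-/

open scoped Classical

open Finset

section Orthogonality

variable {G R : Type*} [AddCommGroup G] [Fintype G] [CommRing R] [IsDomain R]

theorem AddChar.sum_addSubgroup_eq_ite (ψ : AddChar G R) (P : AddSubgroup G) :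
    ∑ B ∈ univ.filter (· ∈ P), ψ B
      = if ∀ B ∈ P, ψ B = 1 then (#(univ.filter (· ∈ P)) : R) else 0 := by
  have htrivial : (∀ B ∈ P, ψ B = 1) ↔ ψ.compAddMonoidHom P.subtype = 0 := by
    rw [AddChar.eq_zero_iff, Subtype.forall]; rfl
  rw [sum_subtype (p := (· ∈ P)) _ (fun _ => by simp), ← Fintype.card_subtype,
    if_congr htrivial rfl rfl]
  exact (ψ.compAddMonoidHom P.subtype).sum_eq_ite

theorem AddChar.sum_addSubgroup_sum_mul_eq_card_mul {α : Type*} [Fintype α]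
    (χ : α → AddChar G R) (P : AddSubgroup G) (f : α → R) :
    ∑ B ∈ univ.filter (· ∈ P), ∑ A, χ A B * f A
      = #(univ.filter (· ∈ P)) * ∑ A ∈ univ.filter (fun A => ∀ B ∈ P, χ A B = 1), f A := by
  rw [sum_comm, mul_sum, sum_filter]
  refine sum_congr rfl fun A _ => ?_
  rw [← sum_mul, (χ A).sum_addSubgroup_eq_ite, ite_mul, zero_mul]

end Orthogonality

section MatrixPairing

variable {m n : Type*} [Fintype m] [Fintype n] {b : ℕ} [NeZero b]

/-- The pairing `A • B` of `ℤ_b^{m×n}` with itself, as a character in `B`. -/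
noncomputable def Matrix.pairingChar (A : Matrix m n (ZMod b)) :
    AddChar (Matrix m n (ZMod b)) ℂ where
  toFun B := ∏ i, ∏ j, ZMod.stdAddChar (A i j * B i j)
  map_zero_eq_one' := by simp
  map_add_eq_mul' B C := by
    simp only [Matrix.add_apply, mul_add, AddChar.map_add_eq_mul, prod_mul_distrib]

theorem ZMod.exp_pow_val_mul_val (a c : ZMod b) :
    Complex.exp (2 * Real.pi * Complex.I / b) ^ (a.val * c.val) = stdAddChar (a * c) := by
  have hcast : ((a.val * c.val : ℕ) : ZMod b) = a * c := by simp
  rw [← hcast, stdAddChar_apply, toCircle_natCast, ← Complex.exp_nat_mul]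
  ring_nf

theorem Matrix.exp_pow_sum_val_mul_val (A B : Matrix m n (ZMod b)) :
    Complex.exp (2 * Real.pi * Complex.I / b) ^ (∑ i, ∑ j, (A i j).val * (B i j).val)
      = A.pairingChar B := by
  simp only [← prod_pow_eq_pow_sum, ZMod.exp_pow_val_mul_val]
  rfl

theorem ZMod.sum_stdAddChar_mul_mul_ite (c : ZMod b) (X : ℂ) :
    ∑ a : ZMod b, stdAddChar (a * c) * (if a = 0 then 1 else X)
      = 1 + (if c = 0 then (b : ℂ) - 1 else -1) * X := by
  have hsplit : ∀ a : ZMod b, stdAddChar (a * c) * (if a = 0 then 1 else X)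
      = stdAddChar (a * c) * X + if a = 0 then 1 - X else 0 := by
    intro a
    split_ifs with ha <;> simp [ha]
  simp only [hsplit, sum_add_distrib, ← sum_mul, sum_ite_eq', mem_univ, if_true,
    AddChar.sum_mulShift c (isPrimitive_stdAddChar b), ZMod.card]
  split_ifs <;> ring

theorem Matrix.prod_one_add_ite_mul_eq_sum_pairingChar [DecidableEq m] [DecidableEq n]
    (X : m → n → ℂ) (B : Matrix m n (ZMod b)) :
    ∏ i, ∏ j, (1 + (if B i j = 0 then (b : ℂ) - 1 else -1) * X i j)
      = ∑ A : Matrix m n (ZMod b),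
          A.pairingChar B * ∏ i, ∏ j, (if A i j = 0 then 1 else X i j) := by
  simp only [← ZMod.sum_stdAddChar_mul_mul_ite, Fintype.prod_sum, prod_mul_distrib]
  rfl

end MatrixPairing

theorem Real.rpow_mul_sum_sum_ite {m n α : Type*} [Fintype m] [Fintype n] [Zero α]
    [DecidableEq α] {x : ℝ} (hx : 0 < x) (c : ℝ) (ν : m → n → ℝ) (A : Matrix m n α) :
    x ^ (c * ∑ i, ∑ j, ν i j * (if A i j = 0 then 0 else 1))
      = ∏ i, ∏ j, if A i j = 0 then 1 else x ^ (c * ν i j) := by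
  simp only [mul_sum, Real.rpow_sum_of_pos hx]
  refine prod_congr rfl fun i _ => prod_congr rfl fun j _ => ?_
  split_ifs <;> simp

theorem inversion_formula_general_weight_general (b s n : ℕ) [NeZero b]
    (P : AddSubgroup (Matrix (Fin s) (Fin n) (ZMod b)))
    (ν : Fin s → Fin n → ℝ) :
    (∑ A ∈ Finset.univ.filter
        (fun A : Matrix (Fin s) (Fin n) (ZMod b) =>
          (∀ B ∈ P,
            Complex.exp (2 * Real.pi * Complex.I / b) ^
              (∑ i : Fin s, ∑ j : Fin n, (A i j).val * (B i j).val) = 1) ∧ A ≠ 0),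
        (b : ℝ) ^
          (-2 * ∑ i : Fin s, ∑ j : Fin n, ν i j * (if A i j = 0 then 0 else 1)))
      = -1 + (1 / ((Finset.univ.filter (· ∈ P)).card : ℝ)) *
          ∑ B ∈ Finset.univ.filter (· ∈ P),
            ∏ i : Fin s, ∏ j : Fin n,
              (1 + (if B i j = 0 then (b : ℝ) - 1 else -1) * (b : ℝ) ^ (-2 * ν i j)) := by
  have hb_pos : (0 : ℝ) < b := by simp [Nat.pos_of_neZero]
  have hcard : (#(univ.filter (· ∈ P)) : ℂ) ≠ 0 := by
    exact_mod_cast (card_pos.mpr ⟨0, by simp [P.zero_mem]⟩).ne'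
  have hzero : (0 : Matrix (Fin s) (Fin n) (ZMod b)) ∈
      univ.filter (fun A => ∀ B ∈ P, A.pairingChar B = 1) := by
    simp [Matrix.pairingChar]
  simp only [Matrix.exp_pow_sum_val_mul_val, Real.rpow_mul_sum_sum_ite hb_pos]
  apply Complex.ofReal_injective
  push_cast [apply_ite Complex.ofReal]
  simp only [Matrix.prod_one_add_ite_mul_eq_sum_pairingChar]
  rw [AddChar.sum_addSubgroup_sum_mul_eq_card_mul, ← filter_filter, filter_ne',
    ← add_sum_erase _ _ hzero, one_div, inv_mul_cancel_left₀ hcard]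
  simp

/-- MacWilliams-type inversion formula for the weighted figure of merit:
`∑_{A ∈ P^⊥ \ {0}} b^{−2ν(A)} = −1 + |P|⁻¹ ∑_{B ∈ P} ∏_{i,j} (1 + η(b_{i,j}) b^{−2ν_{i,j}})`. -/
theorem inversion_formula_general_weight (b s n : ℕ) (hb : 2 ≤ b) [NeZero b]
    (P : AddSubgroup (Matrix (Fin s) (Fin n) (ZMod b)))
    (ν : Fin s → Fin n → ℝ) :
    (∑ A ∈ Finset.univ.filter
        (fun A : Matrix (Fin s) (Fin n) (ZMod b) =>
          (∀ B ∈ P,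
            Complex.exp (2 * Real.pi * Complex.I / b) ^
              (∑ i : Fin s, ∑ j : Fin n, (A i j).val * (B i j).val) = 1) ∧ A ≠ 0),
        (b : ℝ) ^
          (-2 * ∑ i : Fin s, ∑ j : Fin n, ν i j * (if A i j = 0 then 0 else 1)))
      = -1 + (1 / ((Finset.univ.filter (· ∈ P)).card : ℝ)) *
          ∑ B ∈ Finset.univ.filter (· ∈ P),
            ∏ i : Fin s, ∏ j : Fin n,
              (1 + (if B i j = 0 then (b : ℝ) - 1 else -1) * (b : ℝ) ^ (-2 * ν i j)) :=
  inversion_formula_general_weight_general b s n P ν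
end

section
/- Computable formula for W(P;μ): for a subgroup P ⊆ ℤ_b^{s×n}, W(P;μ)² = −1 + |P|^{-1} ∑_{B∈P} ∏_{i=1}^s ∏_{j=1}^n (1 + η(b_{i,j}) b^{−2j}), where μ is the Dick weight μ(A) = ∑_{i,j} j δ(a_{i,j}), W(P;μ)² = ∑_{A ∈ P^⊥\{0}} b^{−2μ(A)}, η(0) = b−1 and η(c) = −1 for c ≠ 0. -/
/-!
Poisson summation over `P`: a character of `P` is trivial or sums to zero, so
`|P| · ∑_{A ∈ P^⊥} w(A) = ∑_{B ∈ P} ∑_A w(A) (A • B)` for every weight `w`. The weight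
`b^{-2μ(A)}` is a product over the entries of `ρ_j(a) = 1` for `a = 0` and `b^{-2j}` otherwise,
so its transform factorises, and by orthogonality of `a ↦ ω_b^{ac}` each factor is
`∑_a ρ_j(a) ω_b^{ac} = 1 + η(c) b^{-2j}`. Removing the term `A = 0` gives the `-1`.
-/

open scoped Classical
open Finset

section Annihilator

variable {G : Type*} [AddCommGroup G] [Fintype G]

theorem AddChar.sum_mem_addSubgroup (ψ : AddChar G ℂ) (P : AddSubgroup G) :
    ∑ B ∈ univ.filter (· ∈ P), ψ B =
      if ∀ B ∈ P, ψ B = 1 then (#(univ.filter (· ∈ P)) : ℂ) else 0 := by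
  split_ifs with hψ
  · rw [sum_congr rfl fun B hB => hψ B (mem_filter.mp hB).2, sum_const, nsmul_one]
  · obtain ⟨B, hB, hB1⟩ := not_forall₂.mp hψ
    have hne : ψ.compAddMonoidHom P.subtype ≠ 1 := AddChar.ne_one_iff.mpr ⟨⟨B, hB⟩, hB1⟩
    rw [sum_subtype _ (p := (· ∈ P)) (fun B => by simp) ψ]
    exact AddChar.sum_eq_zero_of_ne_one hne

theorem card_mul_sum_annihilator (ψ : G → AddChar G ℂ) (P : AddSubgroup G) (w : G → ℂ) :
    #(univ.filter (· ∈ P)) * ∑ A ∈ univ.filter (fun A => ∀ B ∈ P, ψ A B = 1), w A =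
      ∑ B ∈ univ.filter (· ∈ P), ∑ A, w A * ψ A B := by
  simp_rw [sum_comm (s := univ.filter (· ∈ P)), ← mul_sum, AddChar.sum_mem_addSubgroup,
    mul_ite, mul_zero, ← sum_filter, mul_sum, mul_comm]

end Annihilator

theorem zpow_sum₀ {ι K : Type*} [CommGroupWithZero K] {x : K} (hx : x ≠ 0) (s : Finset ι)
    (f : ι → ℤ) : x ^ (∑ i ∈ s, f i) = ∏ i ∈ s, x ^ f i := by
  induction s using Finset.cons_induction with
  | empty => simp
  | cons a s ha ih => rw [sum_cons, prod_cons, zpow_add₀ hx, ih]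

theorem zpow_mul_sum_ite_eq_prod_ite {m n α K : Type*} [Fintype m] [Fintype n] [Zero α]
    [DecidableEq α] [Field K] {x : K} (hx : x ≠ 0) (c : ℤ) (e : m → n → ℤ) (A : Matrix m n α) :
    x ^ (c * ∑ i, ∑ j, e i j * (if A i j = 0 then 0 else 1)) =
      ∏ i, ∏ j, if A i j = 0 then 1 else x ^ (c * e i j) := by
  simp_rw [mul_sum, zpow_sum₀ hx]
  refine prod_congr rfl fun i _ => prod_congr rfl fun j _ => ?_
  split_ifs <;> simp

theorem Matrix.sum_prod_entries {m n α R : Type*} [Fintype m] [DecidableEq m] [Fintype n]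
    [DecidableEq n] [Fintype α] [CommSemiring R] (f : m → n → α → R) :
    ∑ A : Matrix m n α, ∏ i, ∏ j, f i j (A i j) = ∏ i, ∏ j, ∑ a, f i j a := by
  simp_rw [Fintype.prod_sum]
  exact Matrix.of.sum_comp fun A => ∏ i, ∏ j, f i j (A i j)

namespace ZMod

variable {b : ℕ} [NeZero b]

theorem exp_pow_val_mul_val_s12 (x y : ZMod b) :
    Complex.exp (2 * Real.pi * Complex.I / b) ^ (x.val * y.val) = stdAddChar (x * y) := by
  have hcast : (((x.val * y.val : ℕ) : ℤ) : ZMod b) = x * y := by simp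
  rw [← hcast, stdAddChar_coe, ← Complex.exp_nat_mul]
  congr 1
  push_cast
  ring

theorem sum_ite_zero_mul_stdAddChar (c : ZMod b) (r : ℂ) :
    ∑ a : ZMod b, (if a = 0 then 1 else r) * stdAddChar (a * c) =
      1 + (if c = 0 then (b : ℂ) - 1 else -1) * r := by
  have hsplit (a : ZMod b) : (if a = 0 then 1 else r) * stdAddChar (a * c) =
      r * stdAddChar (a * c) + if a = 0 then 1 - r else 0 := by
    split_ifs with ha <;> simp [ha]
  simp_rw [hsplit, sum_add_distrib, ← mul_sum, AddChar.sum_mulShift c (isPrimitive_stdAddChar b),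
    sum_ite_eq', mem_univ, if_true, ZMod.card]
  split_ifs <;> ring

end ZMod

namespace Matrix

variable {m n : Type*} [Fintype m] [Fintype n] {b : ℕ} [NeZero b]

/-- `pairingChar A B` is the paper's `A • B`. -/
noncomputable def pairingChar_s12 (A : Matrix m n (ZMod b)) : AddChar (Matrix m n (ZMod b)) ℂ where
  toFun B := ∏ i, ∏ j, ZMod.stdAddChar (A i j * B i j)
  map_zero_eq_one' := by simp
  map_add_eq_mul' B C := by simp [mul_add, AddChar.map_add_eq_mul, prod_mul_distrib]

theorem pairingChar_apply (A B : Matrix m n (ZMod b)) :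
    pairingChar_s12 A B = ∏ i, ∏ j, ZMod.stdAddChar (A i j * B i j) := rfl

theorem pairingChar_zero : pairingChar_s12 (0 : Matrix m n (ZMod b)) = 1 := by
  ext B
  simp [pairingChar_apply]

theorem exp_pow_eq_pairingChar (A B : Matrix m n (ZMod b)) :
    Complex.exp (2 * Real.pi * Complex.I / b) ^ (∑ i, ∑ j, (A i j).val * (B i j).val) =
      pairingChar_s12 A B := by
  simp_rw [← prod_pow_eq_pow_sum, ZMod.exp_pow_val_mul_val_s12, pairingChar_apply]

variable [DecidableEq m] [DecidableEq n]

theorem sum_prod_ite_mul_pairingChar (B : Matrix m n (ZMod b)) (r : m → n → ℂ) :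
    ∑ A : Matrix m n (ZMod b), (∏ i, ∏ j, if A i j = 0 then 1 else r i j) * pairingChar_s12 A B =
      ∏ i, ∏ j, (1 + (if B i j = 0 then (b : ℂ) - 1 else -1) * r i j) := by
  simp only [← ZMod.sum_ite_zero_mul_stdAddChar]
  rw [← sum_prod_entries fun i j a => (if a = 0 then 1 else r i j) * ZMod.stdAddChar (a * B i j)]
  refine sum_congr rfl fun A _ => ?_
  simp only [pairingChar_apply, ← prod_mul_distrib]

theorem sum_annihilator_prod_ite (P : AddSubgroup (Matrix m n (ZMod b))) (r : m → n → ℂ) :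
    ∑ A ∈ univ.filter (fun A : Matrix m n (ZMod b) =>
        (∀ B ∈ P, pairingChar_s12 A B = 1) ∧ A ≠ 0), ∏ i, ∏ j, (if A i j = 0 then 1 else r i j) =
      -1 + 1 / #(univ.filter (· ∈ P)) * ∑ B ∈ univ.filter (· ∈ P),
        ∏ i, ∏ j, (1 + (if B i j = 0 then (b : ℂ) - 1 else -1) * r i j) := by
  have hcard : (#(univ.filter (· ∈ P)) : ℂ) ≠ 0 :=
    Nat.cast_ne_zero.mpr (card_ne_zero.mpr ⟨0, by simp [P.zero_mem]⟩)
  have hzero : (0 : Matrix m n (ZMod b)) ∈ univ.filter (fun A => ∀ B ∈ P, pairingChar_s12 A B = 1) := by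
    rw [mem_filter, pairingChar_zero]
    exact ⟨mem_univ _, fun B _ => rfl⟩
  have poisson := card_mul_sum_annihilator pairingChar_s12 P
    fun A => ∏ i, ∏ j, if A i j = 0 then 1 else r i j
  rw [sum_congr rfl fun B _ => sum_prod_ite_mul_pairingChar B r] at poisson
  rw [← filter_filter, filter_ne', sum_erase_eq_sub hzero, ← poisson, one_div,
    inv_mul_cancel_left₀ hcard]
  simp only [zero_apply, if_true, prod_const_one]
  ring

end Matrix

theorem inversion_formula_dick_weight_general (b s n : ℕ) [NeZero b]
    (P : AddSubgroup (Matrix (Fin s) (Fin n) (ZMod b))) :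
    (∑ A ∈ Finset.univ.filter
        (fun A : Matrix (Fin s) (Fin n) (ZMod b) =>
          (∀ B ∈ P,
            Complex.exp (2 * Real.pi * Complex.I / b) ^
              (∑ i : Fin s, ∑ j : Fin n, (A i j).val * (B i j).val) = 1) ∧ A ≠ 0),
        (b : ℝ) ^
          (-2 * ∑ i : Fin s, ∑ j : Fin n,
            ((j : ℕ) + 1 : ℤ) * (if A i j = 0 then 0 else 1)))
      = -1 + (1 / ((Finset.univ.filter (· ∈ P)).card : ℝ)) *
          ∑ B ∈ Finset.univ.filter (· ∈ P),
            ∏ i : Fin s, ∏ j : Fin n,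
              (1 + (if B i j = 0 then (b : ℝ) - 1 else -1) *
                (b : ℝ) ^ (-2 * ((j : ℕ) + 1 : ℤ))) := by
  have hb : (b : ℝ) ≠ 0 := Nat.cast_ne_zero.mpr (NeZero.ne b)
  simp only [Matrix.exp_pow_eq_pairingChar, zpow_mul_sum_ite_eq_prod_ite hb]
  rw [← Complex.ofReal_inj]
  push_cast [apply_ite]
  exact Matrix.sum_annihilator_prod_ite P fun _ j => (b : ℂ) ^ (-2 * ((j : ℕ) + 1 : ℤ))

/-- Computable formula for `W(P;μ)²` with the Dick weight `μ`. -/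
theorem inversion_formula_dick_weight (b s n : ℕ) (hb : 2 ≤ b) [NeZero b]
    (P : AddSubgroup (Matrix (Fin s) (Fin n) (ZMod b))) :
    (∑ A ∈ Finset.univ.filter
        (fun A : Matrix (Fin s) (Fin n) (ZMod b) =>
          (∀ B ∈ P,
            Complex.exp (2 * Real.pi * Complex.I / b) ^
              (∑ i : Fin s, ∑ j : Fin n, (A i j).val * (B i j).val) = 1) ∧ A ≠ 0),
        (b : ℝ) ^
          (-2 * ∑ i : Fin s, ∑ j : Fin n,
            ((j : ℕ) + 1 : ℤ) * (if A i j = 0 then 0 else 1)))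
      = -1 + (1 / ((Finset.univ.filter (· ∈ P)).card : ℝ)) *
          ∑ B ∈ Finset.univ.filter (· ∈ P),
            ∏ i : Fin s, ∏ j : Fin n,
              (1 + (if B i j = 0 then (b : ℝ) - 1 else -1) *
                (b : ℝ) ^ (-2 * ((j : ℕ) + 1 : ℤ))) :=
  inversion_formula_dick_weight_general b s n P
end

section
/- Complete weight enumerator MacWilliams identity: for a subgroup P ⊆ ℤ_b^{s×n} and indeterminates (substituted by complex values) x_{i,j}(c) for c ∈ ℤ_b, one has ∑_{A ∈ P^⊥} ∏_{i,j} x_{i,j}(a_{i,j}) = |P|^{-1} ∑_{B ∈ P} ∏_{i,j} ∑_{c ∈ ℤ_b} ω_b^{c·b_{i,j}} x_{i,j}(c). -/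
/-! Poisson summation over the subgroup `P`: expanding each factor of the right-hand product turns it
into `∑ A, χ_A(B) ∏ x_{i,j}(a_{i,j})` with `χ_A(B) = ω_b^{∑ a_{i,j} b_{i,j}}`, and after exchanging
the sums over `A` and `B ∈ P`, the character sum `∑_{B ∈ P} χ_A(B)` equals `|P|` for `A ∈ P^⊥`
and vanishes otherwise. -/

open scoped Classical

open Finset

namespace AddChar

variable {G R : Type*}

lemma map_sum_eq_prod [AddCommMonoid G] [CommMonoid R] {ι : Type*} (ψ : AddChar G R)
    (s : Finset ι) (f : ι → G) : ψ (∑ i ∈ s, f i) = ∏ i ∈ s, ψ (f i) := by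
  induction s using Finset.cons_induction with
  | empty => simp
  | cons a s _ ih => rw [sum_cons, prod_cons, map_add_eq_mul, ih]

lemma sum_filter_mem_addSubgroup [AddCommGroup G] [Fintype G] [CommSemiring R] [IsDomain R]
    (ψ : AddChar G R) (H : AddSubgroup G) :
    ∑ B ∈ univ.filter (· ∈ H), ψ B =
      if ∀ B ∈ H, ψ B = 1 then ((univ.filter (· ∈ H)).card : R) else 0 := by
  have hrestrict : ψ.compAddMonoidHom H.subtype = 0 ↔ ∀ B ∈ H, ψ B = 1 := by
    simp [eq_zero_iff]
  rw [sum_subtype (p := (· ∈ H)) _ (fun B => by simp), ← Fintype.card_subtype,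
    ← if_congr hrestrict rfl rfl]
  exact (ψ.compAddMonoidHom H.subtype).sum_eq_ite

/-- Poisson summation for a family of characters `χ A` indexed by the dual side. -/
theorem sum_filter_forall_eq_one [AddCommGroup G] [Fintype G] [Field R] [CharZero R]
    {Γ : Type*} [Fintype Γ] (χ : Γ → AddChar G R) (H : AddSubgroup G) (f : Γ → R) :
    ∑ A ∈ univ.filter (fun A => ∀ B ∈ H, χ A B = 1), f A =
      1 / ((univ.filter (· ∈ H)).card : R) *
        ∑ B ∈ univ.filter (· ∈ H), ∑ A, χ A B * f A := by
  have hcard : ((univ.filter (· ∈ H)).card : R) ≠ 0 :=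
    Nat.cast_ne_zero.2 (card_ne_zero.2 ⟨0, by simp⟩)
  rw [sum_comm, mul_sum, sum_filter]
  refine sum_congr rfl fun A _ => ?_
  rw [← sum_mul, sum_filter_mem_addSubgroup]
  split_ifs
  · field_simp
  · simp

variable {m n : Type*} [Fintype m] [Fintype n]

def matrixPairing [CommRing G] [Monoid R] (ψ : AddChar G R) (A : Matrix m n G) :
    AddChar (Matrix m n G) R :=
  ψ.compAddMonoidHom <| AddMonoidHom.mk' (fun B => ∑ i, ∑ j, A i j * B i j) fun B C => by
    simp only [Matrix.add_apply, mul_add, sum_add_distrib]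

lemma matrixPairing_apply [CommRing G] [Monoid R] (ψ : AddChar G R) (A B : Matrix m n G) :
    ψ.matrixPairing A B = ψ (∑ i, ∑ j, A i j * B i j) := rfl

lemma sum_matrixPairing_mul_prod [CommRing G] [Fintype G] [CommSemiring R] (ψ : AddChar G R)
    (B : Matrix m n G) (x : m → n → G → R) :
    ∑ A : Matrix m n G, ψ.matrixPairing A B * ∏ i, ∏ j, x i j (A i j) =
      ∏ i, ∏ j, ∑ c, ψ (c * B i j) * x i j c := by
  simp only [Fintype.prod_sum]
  refine Fintype.sum_congr _ _ fun A => ?_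
  simp only [matrixPairing_apply, map_sum_eq_prod, ← prod_mul_distrib]

lemma zmodChar_mul {b : ℕ} [NeZero b] [CommMonoid R] {ζ : R} (hζ : ζ ^ b = 1) (c d : ZMod b) :
    zmodChar b hζ (c * d) = ζ ^ (c.val * d.val) := by
  rw [← zmodChar_apply' hζ]
  push_cast [ZMod.natCast_val, ZMod.cast_id]
  rfl

lemma zmodChar_matrixPairing {b : ℕ} [NeZero b] [CommMonoid R] {ζ : R} (hζ : ζ ^ b = 1)
    (A B : Matrix m n (ZMod b)) :
    (zmodChar b hζ).matrixPairing A B = ζ ^ ∑ i, ∑ j, (A i j).val * (B i j).val := by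
  simp only [matrixPairing_apply, map_sum_eq_prod, zmodChar_mul, prod_pow_eq_pow_sum]

end AddChar

theorem macwilliams_cwe_general (b s n : ℕ) [NeZero b]
    (P : AddSubgroup (Matrix (Fin s) (Fin n) (ZMod b)))
    (x : Fin s → Fin n → ZMod b → ℂ) :
    (∑ A ∈ Finset.univ.filter
        (fun A : Matrix (Fin s) (Fin n) (ZMod b) => ∀ B ∈ P,
          Complex.exp (2 * Real.pi * Complex.I / b) ^
            (∑ i : Fin s, ∑ j : Fin n, (A i j).val * (B i j).val) = 1),
        ∏ i : Fin s, ∏ j : Fin n, x i j (A i j))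
      = (1 / ((Finset.univ.filter (· ∈ P)).card : ℂ)) *
          ∑ B ∈ Finset.univ.filter (· ∈ P),
            ∏ i : Fin s, ∏ j : Fin n,
              ∑ c : ZMod b,
                Complex.exp (2 * Real.pi * Complex.I / b) ^ (c.val * (B i j).val) *
                  x i j c := by
  have hω := (Complex.isPrimitiveRoot_exp b (NeZero.ne b)).pow_eq_one
  simp only [← AddChar.zmodChar_matrixPairing hω, ← AddChar.zmodChar_mul hω]
  rw [sum_congr rfl fun B _ =>
    (AddChar.sum_matrixPairing_mul_prod (AddChar.zmodChar b hω) B x).symm]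
  -- `convert` reconciles the decidability instance `simp` left on the rewritten filter predicate.
  convert AddChar.sum_filter_forall_eq_one (AddChar.zmodChar b hω).matrixPairing P
    fun A => ∏ i, ∏ j, x i j (A i j)

/-- MacWilliams identity for the complete weight enumerator of a digital net
`P ⊆ ℤ_b^{s×n}` and its dual `P^⊥`. -/
theorem macwilliams_cwe (b s n : ℕ) (hb : 2 ≤ b) [NeZero b]
    (P : AddSubgroup (Matrix (Fin s) (Fin n) (ZMod b)))
    (x : Fin s → Fin n → ZMod b → ℂ) :
    (∑ A ∈ Finset.univ.filter
        (fun A : Matrix (Fin s) (Fin n) (ZMod b) => ∀ B ∈ P,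
          Complex.exp (2 * Real.pi * Complex.I / b) ^
            (∑ i : Fin s, ∑ j : Fin n, (A i j).val * (B i j).val) = 1),
        ∏ i : Fin s, ∏ j : Fin n, x i j (A i j))
      = (1 / ((Finset.univ.filter (· ∈ P)).card : ℂ)) *
          ∑ B ∈ Finset.univ.filter (· ∈ P),
            ∏ i : Fin s, ∏ j : Fin n,
              ∑ c : ZMod b,
                Complex.exp (2 * Real.pi * Complex.I / b) ^ (c.val * (B i j).val) *
                  x i j c :=
  macwilliams_cwe_general b s n P x
end

section
/- Relationship between Walsh coefficients and discrete Fourier coefficients of the discretization: for integrable f : [0,1)^s → ℝ and A ∈ ℤ_b^{s×n}, the complex conjugate of the φ(A)-th Walsh coefficient of f equals the discrete Fourier coefficient f̂_n(A) of the n-digit discretization, where φ(A) = (∑_{j=1}^n a_{i,j} b^{j−1})_{i=1}^s. -/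
/-!
On the elementary box `I_n(X)` the first `n` `b`-adic digits of the `i`-th coordinate are
`x_{i,1}, …, x_{i,n}`, so `wal_{φ(A)}` is constant there, equal to `ω_b^{∑ a_{i,j} x_{i,j}}`.
The `b^{sn}` boxes partition `[0,1)^s`, hence the Walsh coefficient splits into the sum over `X`
of this constant times `∫_{I_n(X)} f = b^{-sn} f_n(X)`. Both digit facts are proved one digit at
a time, from `t ∈ I(c₀, c₁, …) ↔ b t - c₀ ∈ I(c₁, …)`.
-/

open MeasureTheory
open scoped ComplexConjugate

/-- The elementary box `I_n(X) ⊆ [0,1)^s` attached to `X ∈ ℤ_b^{s×n}`. -/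
noncomputable def elementaryBox (b s n : ℕ) (X : Matrix (Fin s) (Fin n) (ZMod b)) :
    Set (Fin s → ℝ) :=
  Set.univ.pi fun i =>
    Set.Ico (∑ j : Fin n, ((X i j).val : ℝ) * (b : ℝ) ^ (-((j : ℕ) + 1) : ℤ))
      ((∑ j : Fin n, ((X i j).val : ℝ) * (b : ℝ) ^ (-((j : ℕ) + 1) : ℤ)) +
        (b : ℝ) ^ (-(n : ℤ)))

/-- The `n`-digit discretization `f_n(X)`: the average of `f` over `I_n(X)`. -/
noncomputable def discretization (b s n : ℕ) (f : (Fin s → ℝ) → ℝ)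
    (X : Matrix (Fin s) (Fin n) (ZMod b)) : ℝ :=
  ((b : ℝ) ^ (s * n)) * ∫ x in elementaryBox b s n X, f x

/-- The `b`-adic Walsh function `wal_{φ(A)}` for `A ∈ ℤ_b^{s×n}`, where the `i`-th
component of `φ(A)` has `b`-adic digits `a_{i,1}, …, a_{i,n}`, evaluated using the
`b`-adic digits `⌊x_i b^j⌋ mod b` of each coordinate. -/
noncomputable def walshFun (b s n : ℕ) (A : Matrix (Fin s) (Fin n) (ZMod b))
    (x : Fin s → ℝ) : ℂ :=
  Complex.exp (2 * Real.pi * Complex.I / b) ^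
    (∑ i : Fin s, ∑ j : Fin n,
      ((A i j).val : ℤ) * (⌊x i * (b : ℝ) ^ ((j : ℕ) + 1)⌋ % (b : ℤ)))

open Set

section DigitExpansion

variable {b n : ℕ}

noncomputable def digitExpansion (b : ℕ) (c : Fin n → ℕ) : ℝ :=
  ∑ j : Fin n, (c j : ℝ) * (b : ℝ) ^ (-((j : ℕ) + 1) : ℤ)

noncomputable def elementaryInterval (b : ℕ) (c : Fin n → ℕ) : Set ℝ :=
  Ico (digitExpansion b c) (digitExpansion b c + (b : ℝ) ^ (-(n : ℤ)))

@[simp]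
lemma digitExpansion_zero (c : Fin 0 → ℕ) : digitExpansion b c = 0 := by
  simp [digitExpansion]

lemma digitExpansion_nonneg (c : Fin n → ℕ) : 0 ≤ digitExpansion b c :=
  Finset.sum_nonneg fun _ _ => by positivity

variable [NeZero b]

lemma zpow_neg_succ_eq_div (m : ℕ) :
    (b : ℝ) ^ (-((m : ℤ) + 1)) = (b : ℝ) ^ (-(m : ℤ)) / b := by
  rw [neg_add, ← sub_eq_add_neg, zpow_sub_one₀ (NeZero.ne _), div_eq_mul_inv]

lemma digitExpansion_succ (c : Fin (n + 1) → ℕ) :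
    digitExpansion b c = (c 0 + digitExpansion b (Fin.tail c)) / b := by
  simp only [digitExpansion, Fin.sum_univ_succ, Fin.tail, add_div, Finset.sum_div]
  congr 1
  · simp [div_eq_mul_inv]
  · refine Finset.sum_congr rfl fun j _ => ?_
    rw [Fin.val_succ, zpow_neg_succ_eq_div (j + 1)]
    push_cast
    ring

lemma digitExpansion_add_zpow_le_one {c : Fin n → ℕ} (hc : ∀ j, c j < b) :
    digitExpansion b c + (b : ℝ) ^ (-(n : ℤ)) ≤ 1 := by
  induction n with
  | zero => simp
  | succ n ih =>
    have htail := ih (c := Fin.tail c) fun j => hc j.succ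
    have hc0 : (c 0 : ℝ) + 1 ≤ b := by exact_mod_cast hc 0
    have hb : (0 : ℝ) < b := Nat.cast_pos.2 (NeZero.pos b)
    rw [digitExpansion_succ, Nat.cast_succ, zpow_neg_succ_eq_div, ← add_div, div_le_one hb]
    linarith

lemma elementaryInterval_subset_Ico {c : Fin n → ℕ} (hc : ∀ j, c j < b) :
    elementaryInterval b c ⊆ Ico 0 1 := fun _ ht =>
  ⟨(digitExpansion_nonneg c).trans ht.1, ht.2.trans_le (digitExpansion_add_zpow_le_one hc)⟩

lemma mem_elementaryInterval_succ_iff (c : Fin (n + 1) → ℕ) (t : ℝ) :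
    t ∈ elementaryInterval b c ↔ t * b - c 0 ∈ elementaryInterval b (Fin.tail c) := by
  have hb : (0 : ℝ) < b := Nat.cast_pos.2 (NeZero.pos b)
  simp only [elementaryInterval, mem_Ico, digitExpansion_succ, Nat.cast_succ,
    zpow_neg_succ_eq_div, ← add_div, div_le_iff₀ hb, lt_div_iff₀ hb]
  constructor <;> rintro ⟨h₁, h₂⟩ <;> constructor <;> linarith

lemma floor_mul_pow_emod_eq_of_mem_elementaryInterval {c : Fin n → ℕ} (hc : ∀ j, c j < b)
    {t : ℝ} (ht : t ∈ elementaryInterval b c) (j : Fin n) :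
    ⌊t * (b : ℝ) ^ ((j : ℕ) + 1)⌋ % (b : ℤ) = c j := by
  induction n generalizing t with
  | zero => exact j.elim0
  | succ n ih =>
    set t' := t * b - c 0
    have ht' : t' ∈ elementaryInterval b (Fin.tail c) :=
      (mem_elementaryInterval_succ_iff c t).1 ht
    have hshift (m : ℕ) : ⌊t * (b : ℝ) ^ (m + 1)⌋ = c 0 * (b : ℤ) ^ m + ⌊t' * (b : ℝ) ^ m⌋ := by
      rw [show t * (b : ℝ) ^ (m + 1) = t' * (b : ℝ) ^ m + ((c 0 * (b : ℤ) ^ m : ℤ) : ℝ) by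
        push_cast; ring, Int.floor_add_intCast, add_comm]
    induction j using Fin.cases with
    | zero =>
      have hfloor : ⌊t'⌋ = 0 :=
        Int.floor_eq_zero_iff.2 (elementaryInterval_subset_Ico (fun j => hc j.succ) ht')
      rw [Fin.val_zero, hshift, pow_zero, mul_one, pow_zero, mul_one, hfloor, add_zero]
      exact Int.emod_eq_of_lt (by positivity) (by exact_mod_cast hc 0)
    | succ j =>
      rw [Fin.val_succ, hshift, pow_succ, ← mul_assoc, Int.mul_add_emod_self_right]
      exact ih (fun j => hc j.succ) ht' j

lemma exists_mem_elementaryInterval {t : ℝ} (ht : t ∈ Ico 0 1) :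
    ∃ c : Fin n → ℕ, (∀ j, c j < b) ∧ t ∈ elementaryInterval b c := by
  induction n generalizing t with
  | zero => exact ⟨Fin.elim0, fun j => j.elim0, by simpa [elementaryInterval] using ht⟩
  | succ n ih =>
    have hb : (0 : ℝ) < b := Nat.cast_pos.2 (NeZero.pos b)
    have htb : 0 ≤ t * b := mul_nonneg ht.1 hb.le
    set d := ⌊t * b⌋₊
    have hd : d < b := (Nat.floor_lt htb).2 (by nlinarith [ht.2])
    obtain ⟨c, hc, htc⟩ := ih (t := t * b - d)
      ⟨sub_nonneg.2 (Nat.floor_le htb), by linarith [Nat.lt_floor_add_one (t * b)]⟩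
    refine ⟨Fin.cons d c, Fin.cases hd hc, ?_⟩
    rwa [mem_elementaryInterval_succ_iff, Fin.cons_zero, Fin.tail_cons]

end DigitExpansion

section ElementaryBox

variable {b s n : ℕ}

lemma measurableSet_elementaryBox (X : Matrix (Fin s) (Fin n) (ZMod b)) :
    MeasurableSet (elementaryBox b s n X) :=
  .univ_pi fun _ => measurableSet_Ico

variable [NeZero b]

lemma floor_mul_pow_emod_eq_of_mem_elementaryBox {X : Matrix (Fin s) (Fin n) (ZMod b)}
    {x : Fin s → ℝ} (hx : x ∈ elementaryBox b s n X) (i : Fin s) (j : Fin n) :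
    ⌊x i * (b : ℝ) ^ ((j : ℕ) + 1)⌋ % (b : ℤ) = (X i j).val :=
  floor_mul_pow_emod_eq_of_mem_elementaryInterval (fun _ => ZMod.val_lt _) (hx i trivial) j

lemma elementaryBox_subset_unitCube (X : Matrix (Fin s) (Fin n) (ZMod b)) :
    elementaryBox b s n X ⊆ univ.pi fun _ : Fin s => Ico (0 : ℝ) 1 :=
  pi_mono fun _ _ => elementaryInterval_subset_Ico fun _ => ZMod.val_lt _

lemma unitCube_eq_iUnion_elementaryBox :
    (univ.pi fun _ : Fin s => Ico (0 : ℝ) 1) =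
      ⋃ X : Matrix (Fin s) (Fin n) (ZMod b), elementaryBox b s n X := by
  refine Subset.antisymm (fun x hx => ?_) (iUnion_subset elementaryBox_subset_unitCube)
  choose c hc hxc using fun i => exists_mem_elementaryInterval (n := n) (b := b) (hx i trivial)
  refine mem_iUnion.2 ⟨Matrix.of fun i j => (c i j : ZMod b), fun i _ => ?_⟩
  show x i ∈ elementaryInterval b fun j => _
  simpa only [Matrix.of_apply, ZMod.val_cast_of_lt (hc i _)] using hxc i

lemma pairwise_disjoint_elementaryBox :
    Pairwise (Function.onFun Disjoint (elementaryBox b s n)) := by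
  intro X Y hXY
  refine disjoint_left.2 fun x hxX hxY => hXY (Matrix.ext fun i j => ZMod.val_injective _ ?_)
  exact_mod_cast (floor_mul_pow_emod_eq_of_mem_elementaryBox hxX i j).symm.trans
    (floor_mul_pow_emod_eq_of_mem_elementaryBox hxY i j)

lemma walshFun_eq_of_mem_elementaryBox (A : Matrix (Fin s) (Fin n) (ZMod b))
    {X : Matrix (Fin s) (Fin n) (ZMod b)} {x : Fin s → ℝ} (hx : x ∈ elementaryBox b s n X) :
    walshFun b s n A x = Complex.exp (2 * Real.pi * Complex.I / b) ^
      (∑ i : Fin s, ∑ j : Fin n, (A i j).val * (X i j).val) := by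
  simp only [walshFun, floor_mul_pow_emod_eq_of_mem_elementaryBox hx]
  rw [← zpow_natCast]
  push_cast
  rfl

end ElementaryBox

section Integral

variable {b s n : ℕ} [NeZero b] (f : (Fin s → ℝ) → ℝ) (A : Matrix (Fin s) (Fin n) (ZMod b))

lemma integrableOn_ofReal_mul_walshFun_elementaryBox {X : Matrix (Fin s) (Fin n) (ZMod b)}
    (hf : IntegrableOn f (elementaryBox b s n X)) :
    IntegrableOn (fun x => (f x : ℂ) * walshFun b s n A x) (elementaryBox b s n X) :=
  IntegrableOn.congr_fun (hf.ofReal.mul_const _)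
    (fun _ hx => congrArg _ (walshFun_eq_of_mem_elementaryBox A hx).symm)
    (measurableSet_elementaryBox X)

lemma setIntegral_ofReal_mul_walshFun_elementaryBox (X : Matrix (Fin s) (Fin n) (ZMod b)) :
    ∫ x in elementaryBox b s n X, (f x : ℂ) * walshFun b s n A x =
      ((∫ x in elementaryBox b s n X, f x : ℝ) : ℂ) *
        Complex.exp (2 * Real.pi * Complex.I / b) ^
          (∑ i : Fin s, ∑ j : Fin n, (A i j).val * (X i j).val) := by
  rw [setIntegral_congr_fun (measurableSet_elementaryBox X)
    fun _ hx => by rw [walshFun_eq_of_mem_elementaryBox A hx], integral_mul_const]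
  congr 1
  exact integral_ofReal

end Integral

theorem walsh_coeff_eq_dft_of_discretization_general (b s n : ℕ) [NeZero b]
    (f : (Fin s → ℝ) → ℝ)
    (hf : IntegrableOn f (Set.univ.pi fun _ : Fin s => Set.Ico (0 : ℝ) 1))
    (A : Matrix (Fin s) (Fin n) (ZMod b)) :
    conj (∫ x in Set.univ.pi fun _ : Fin s => Set.Ico (0 : ℝ) 1,
        (f x : ℂ) * conj (walshFun b s n A x))
      = ((b : ℂ) ^ (s * n))⁻¹ *
          ∑ X : Matrix (Fin s) (Fin n) (ZMod b),
            (discretization b s n f X : ℂ) *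
              Complex.exp (2 * Real.pi * Complex.I / b) ^
                (∑ i : Fin s, ∑ j : Fin n, (A i j).val * (X i j).val) := by
  rw [← integral_conj]
  simp only [map_mul, Complex.conj_conj, Complex.conj_ofReal]
  rw [unitCube_eq_iUnion_elementaryBox (b := b) (n := n),
    integral_iUnion_fintype measurableSet_elementaryBox pairwise_disjoint_elementaryBox
      fun X => integrableOn_ofReal_mul_walshFun_elementaryBox f A
        (hf.mono_set (elementaryBox_subset_unitCube X)),
    Finset.mul_sum]
  refine Finset.sum_congr rfl fun X _ => ?_
  have hb : (b : ℂ) ≠ 0 := Nat.cast_ne_zero.2 (NeZero.ne b)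
  rw [setIntegral_ofReal_mul_walshFun_elementaryBox, discretization]
  push_cast
  field_simp

/-- Relationship between Walsh coefficients and discrete Fourier coefficients:
`conj (F(f)(φ(A))) = f̂_n(A)`. -/
theorem walsh_coeff_eq_dft_of_discretization (b s n : ℕ) (hb : 2 ≤ b) [NeZero b]
    (f : (Fin s → ℝ) → ℝ)
    (hf : IntegrableOn f (Set.univ.pi fun _ : Fin s => Set.Ico (0 : ℝ) 1))
    (A : Matrix (Fin s) (Fin n) (ZMod b)) :
    conj (∫ x in Set.univ.pi fun _ : Fin s => Set.Ico (0 : ℝ) 1,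
        (f x : ℂ) * conj (walshFun b s n A x))
      = ((b : ℂ) ^ (s * n))⁻¹ *
          ∑ X : Matrix (Fin s) (Fin n) (ZMod b),
            (discretization b s n f X : ℂ) *
              Complex.exp (2 * Real.pi * Complex.I / b) ^
                (∑ i : Fin s, ∑ j : Fin n, (A i j).val * (X i j).val) :=
  walsh_coeff_eq_dft_of_discretization_general b s n f hf A
end

section
/- If P ⊆ ℤ_2^{s×n} is a subgroup and f : [0,1]^s → ℝ satisfies |f̂_n(A)| ≤ M · 2^{−(μ(A)+h(A))} for all nonzero A ∈ ℤ_2^{s×n} (with M ≥ 0), then the root mean square error over random digital shifts satisfies sqrt(Var_{σ∈ℤ_2^{s×n}}[I_{P+σ}(f_n)]) ≤ M · W(P;μ+h), where W(P;μ+h)² = ∑_{A ∈ P^⊥\{0}} 2^{−2(μ(A)+h(A))}. -/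
/-!
Expand `F` in the Walsh basis `walsh A X = (-1) ^ ⟨A, X⟩`. Averaging `walsh A` over a coset
`P + σ` gives `walsh A σ` when `A ∈ P^⊥` and `0` otherwise, so the integration error at the shift
`σ` is the Walsh polynomial `∑_{A ∈ P^⊥ \ 0} F̂(A) walsh A σ`. By Parseval its mean square over `σ`
is `∑_{A ∈ P^⊥ \ 0} F̂(A)²`, which the decay of `F̂` bounds termwise.
-/

open scoped Classical

open Finset

namespace AddChar

variable {A R : Type*} [AddGroup A] [Fintype A] [CommSemiring R] [IsDomain R]

lemma sum_addSubgroup_eq_ite_s18 (ψ : AddChar A R) (H : AddSubgroup A) [DecidablePred (· ∈ H)] :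
    ∑ x ∈ univ.filter (· ∈ H), ψ x =
      if ∀ x ∈ H, ψ x = 1 then ((univ.filter (· ∈ H)).card : R) else 0 := by
  rw [Finset.sum_subtype (p := (· ∈ H)) _ (by simp) (fun x => ψ x)]
  have := sum_eq_ite (ψ.compAddMonoidHom H.subtype)
  simp only [compAddMonoidHom_apply, AddSubgroup.coe_subtype, eq_zero_iff, Subtype.forall] at this
  rw [this, Fintype.card_subtype]

end AddChar

namespace Walsh

variable {m n : Type*} [Fintype m] [Fintype n]

def pairing (A : Matrix m n (ZMod 2)) : Matrix m n (ZMod 2) →+ ZMod 2 where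
  toFun X := ∑ i, ∑ j, A i j * X i j
  map_zero' := by simp
  map_add' X Y := by simp only [Matrix.add_apply, mul_add, sum_add_distrib]

noncomputable def walsh (A : Matrix m n (ZMod 2)) : AddChar (Matrix m n (ZMod 2)) ℝ :=
  (AddChar.zmodChar 2 (neg_one_sq (R := ℝ))).compAddMonoidHom (pairing A)

lemma walsh_apply (A X : Matrix m n (ZMod 2)) :
    walsh A X = (-1) ^ ∑ i, ∑ j, (A i j).val * (X i j).val := by
  rw [← AddChar.zmodChar_apply' (n := 2) neg_one_sq]
  simp [walsh, pairing]

lemma ofReal_walsh (A X : Matrix m n (ZMod 2)) :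
    ((walsh A X : ℝ) : ℂ) = (-1 : ℂ) ^ ∑ i, ∑ j, (A i j).val * (X i j).val := by
  simp [walsh_apply]

lemma walsh_comm (A X : Matrix m n (ZMod 2)) : walsh A X = walsh X A := by
  simp only [walsh_apply, mul_comm]

lemma walsh_add_left (A B X : Matrix m n (ZMod 2)) :
    walsh (A + B) X = walsh A X * walsh B X := by
  rw [walsh_comm, AddChar.map_add_eq_mul, walsh_comm X, walsh_comm X]

variable [DecidableEq m] [DecidableEq n]

lemma walsh_eq_zero_iff {A : Matrix m n (ZMod 2)} : walsh A = 0 ↔ A = 0 := by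
  refine ⟨fun h => ?_, fun h => by ext X; simp [h, walsh_apply]⟩
  by_contra hA
  obtain ⟨i, j, hij⟩ : ∃ i j, A i j = 1 := by
    by_contra! h1
    have h0 : ∀ a : ZMod 2, a ≠ 1 → a = 0 := by decide
    exact hA (Matrix.ext fun i j => h0 _ (h1 i j))
  have hsingle : walsh A (Matrix.single i j 1) = -1 := by
    rw [walsh_apply, sum_eq_single i, sum_eq_single j]
    · simp [hij, ZMod.val_one]
    · intro j' _ hj'
      simp [Matrix.single_apply_of_col_ne i i hj'.symm]
    · simp
    · intro i' _ hi'
      simp [Matrix.single_apply_of_row_ne hi'.symm]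
    · simp
  have := AddChar.eq_zero_iff.mp h (Matrix.single i j 1)
  norm_num [hsingle] at this

lemma sum_walsh_apply (A : Matrix m n (ZMod 2)) :
    ∑ X, walsh A X = if A = 0 then (Fintype.card (Matrix m n (ZMod 2)) : ℝ) else 0 := by
  simp only [AddChar.sum_eq_ite, walsh_eq_zero_iff]

lemma sum_walsh_mul_walsh (A B : Matrix m n (ZMod 2)) :
    ∑ X, walsh A X * walsh B X = if A = B then (Fintype.card (Matrix m n (ZMod 2)) : ℝ) else 0 := by
  simp only [← walsh_add_left, sum_walsh_apply, add_eq_zero_iff_eq_neg, ZModModule.neg_eq_self]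

noncomputable def coeff (F : Matrix m n (ZMod 2) → ℝ) (A : Matrix m n (ZMod 2)) : ℝ :=
  1 / (Fintype.card (Matrix m n (ZMod 2)) : ℝ) * ∑ X, F X * walsh A X

lemma sum_coeff_mul_walsh (F : Matrix m n (ZMod 2) → ℝ) (Y : Matrix m n (ZMod 2)) :
    ∑ A, coeff F A * walsh A Y = F Y := by
  have hN : (Fintype.card (Matrix m n (ZMod 2)) : ℝ) ≠ 0 := by positivity
  calc ∑ A, coeff F A * walsh A Y
      = 1 / (Fintype.card (Matrix m n (ZMod 2)) : ℝ) *
          ∑ X, F X * ∑ A, walsh X A * walsh Y A := by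
        simp only [coeff, mul_sum, sum_mul]
        rw [sum_comm]
        exact sum_congr rfl fun X _ => sum_congr rfl fun A _ => by
          rw [walsh_comm A X, walsh_comm A Y]; ring
    _ = F Y := by
        simp only [sum_walsh_mul_walsh, mul_ite, mul_zero, sum_ite_eq', mem_univ, if_true]
        field_simp

lemma coeff_zero (F : Matrix m n (ZMod 2) → ℝ) :
    coeff F 0 = 1 / (Fintype.card (Matrix m n (ZMod 2)) : ℝ) * ∑ X, F X := by
  simp [coeff, walsh_eq_zero_iff.2 rfl]

/-- The annihilator `P^⊥` of `P`. -/
noncomputable def dual (P : AddSubgroup (Matrix m n (ZMod 2))) : Finset (Matrix m n (ZMod 2)) :=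
  univ.filter fun A => ∀ X ∈ P, walsh A X = 1

lemma zero_mem_dual (P : AddSubgroup (Matrix m n (ZMod 2))) : 0 ∈ dual P := by
  simp [dual, walsh_eq_zero_iff.2 rfl]

lemma cosetAverage_eq_sum_dual (P : AddSubgroup (Matrix m n (ZMod 2)))
    (F : Matrix m n (ZMod 2) → ℝ) (σ : Matrix m n (ZMod 2)) :
    1 / ((univ.filter (· ∈ P)).card : ℝ) * ∑ X ∈ univ.filter (· ∈ P), F (X + σ) =
      ∑ A ∈ dual P, coeff F A * walsh A σ := by
  have hP : ((univ.filter (· ∈ P)).card : ℝ) ≠ 0 :=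
    Nat.cast_ne_zero.2 (card_ne_zero.2 ⟨0, by simp⟩)
  calc 1 / ((univ.filter (· ∈ P)).card : ℝ) * ∑ X ∈ univ.filter (· ∈ P), F (X + σ)
      = 1 / ((univ.filter (· ∈ P)).card : ℝ) *
          ∑ A, coeff F A * walsh A σ * ∑ X ∈ univ.filter (· ∈ P), walsh A X := by
        simp only [← sum_coeff_mul_walsh F (_ + σ), mul_sum, AddChar.map_add_eq_mul]
        rw [sum_comm]
        exact sum_congr rfl fun A _ => sum_congr rfl fun X _ => by ring
    _ = ∑ A ∈ dual P, coeff F A * walsh A σ := by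
        simp only [AddChar.sum_addSubgroup_eq_ite_s18]
        rw [dual, sum_filter, mul_sum]
        refine sum_congr rfl fun A _ => ?_
        split_ifs
        · field_simp
        · simp

lemma cosetAverage_sub_mean_eq (P : AddSubgroup (Matrix m n (ZMod 2)))
    (F : Matrix m n (ZMod 2) → ℝ) (σ : Matrix m n (ZMod 2)) :
    1 / ((univ.filter (· ∈ P)).card : ℝ) * ∑ X ∈ univ.filter (· ∈ P), F (X + σ) -
        1 / (Fintype.card (Matrix m n (ZMod 2)) : ℝ) * ∑ X, F X =
      ∑ A ∈ (dual P).erase 0, coeff F A * walsh A σ := by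
  rw [cosetAverage_eq_sum_dual, ← add_sum_erase _ _ (zero_mem_dual P), ← coeff_zero,
    walsh_eq_zero_iff.2 rfl, AddChar.zero_apply, mul_one, add_sub_cancel_left]

lemma mean_sq_sum_walsh (T : Finset (Matrix m n (ZMod 2))) (g : Matrix m n (ZMod 2) → ℝ) :
    1 / (Fintype.card (Matrix m n (ZMod 2)) : ℝ) * ∑ σ, (∑ A ∈ T, g A * walsh A σ) ^ 2 =
      ∑ A ∈ T, g A ^ 2 := by
  have hN : (Fintype.card (Matrix m n (ZMod 2)) : ℝ) ≠ 0 := by positivity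
  calc 1 / (Fintype.card (Matrix m n (ZMod 2)) : ℝ) * ∑ σ, (∑ A ∈ T, g A * walsh A σ) ^ 2
      = 1 / (Fintype.card (Matrix m n (ZMod 2)) : ℝ) *
          ∑ A ∈ T, ∑ B ∈ T, g A * g B * ∑ σ, walsh A σ * walsh B σ := by
        congr 1
        simp_rw [sq, sum_mul_sum, mul_sum]
        rw [sum_comm]
        refine sum_congr rfl fun A _ => ?_
        rw [sum_comm]
        exact sum_congr rfl fun B _ => sum_congr rfl fun σ _ => by ring
    _ = ∑ A ∈ T, g A ^ 2 := by
        simp only [sum_walsh_mul_walsh, mul_ite, mul_zero, sum_ite_eq, mul_sum]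
        refine sum_congr rfl fun A hA => ?_
        rw [if_pos hA]
        field_simp

lemma mean_sq_cosetAverage_sub_mean (P : AddSubgroup (Matrix m n (ZMod 2)))
    (F : Matrix m n (ZMod 2) → ℝ) :
    1 / (Fintype.card (Matrix m n (ZMod 2)) : ℝ) * ∑ σ,
        (1 / ((univ.filter (· ∈ P)).card : ℝ) * ∑ X ∈ univ.filter (· ∈ P), F (X + σ) -
          1 / (Fintype.card (Matrix m n (ZMod 2)) : ℝ) * ∑ X, F X) ^ 2 =
      ∑ A ∈ (dual P).erase 0, coeff F A ^ 2 := by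
  simp only [cosetAverage_sub_mean_eq]
  exact mean_sq_sum_walsh _ _

lemma ofReal_coeff (F : Matrix m n (ZMod 2) → ℝ) (A : Matrix m n (ZMod 2)) :
    ((coeff F A : ℝ) : ℂ) = 1 / (Fintype.card (Matrix m n (ZMod 2)) : ℂ) *
      ∑ X, (F X : ℂ) * (-1 : ℂ) ^ ∑ i, ∑ j, (A i j).val * (X i j).val := by
  simp [coeff, ofReal_walsh]

lemma erase_zero_dual (P : AddSubgroup (Matrix m n (ZMod 2))) :
    (dual P).erase 0 = univ.filter fun A =>
      (∀ X ∈ P, (-1 : ℂ) ^ ∑ i, ∑ j, (A i j).val * (X i j).val = 1) ∧ A ≠ 0 := by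
  ext A
  simp [dual, ← ofReal_walsh, and_comm]

end Walsh

lemma Real.sqrt_sum_sq_le_mul_sqrt_sum_zpow {ι : Type*} {T : Finset ι} {g : ι → ℝ} {w : ι → ℤ}
    {b M : ℝ} (hM : 0 ≤ M) (h : ∀ a ∈ T, |g a| ≤ M * b ^ (-w a)) :
    √(∑ a ∈ T, g a ^ 2) ≤ M * √(∑ a ∈ T, b ^ (-2 * w a)) := by
  have hsq : ∀ a, (M * b ^ (-w a)) ^ 2 = M ^ 2 * b ^ (-2 * w a) := fun a => by
    rw [mul_pow, ← zpow_natCast (b ^ _), ← zpow_mul]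
    ring_nf
  calc √(∑ a ∈ T, g a ^ 2) ≤ √(∑ a ∈ T, (M * b ^ (-w a)) ^ 2) :=
        Real.sqrt_le_sqrt <| sum_le_sum fun a ha => sq_le_sq.2 ((h a ha).trans (le_abs_self _))
    _ = M * √(∑ a ∈ T, b ^ (-2 * w a)) := by
        simp only [hsq, ← mul_sum, Real.sqrt_mul (sq_nonneg M), Real.sqrt_sq hM]

/-- Koksma–Hlawka type inequality for the root mean square error over `ℤ_2^{s×n}`
with the weight `μ + h` (Dick weight plus Hamming weight): if
`|F̂(A)| ≤ M 2^{−(μ(A)+h(A))}` for all nonzero `A`, then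
`sqrt(Var_σ[I_{P+σ}(F)]) ≤ M · W(P;μ+h)`. -/
theorem koksma_hlawka_rmse_mu_plus_h (s n : ℕ)
    (P : AddSubgroup (Matrix (Fin s) (Fin n) (ZMod 2)))
    (F : Matrix (Fin s) (Fin n) (ZMod 2) → ℝ) (M : ℝ) (hM : 0 ≤ M)
    (hF : ∀ A : Matrix (Fin s) (Fin n) (ZMod 2), A ≠ 0 →
      Norm.norm
          ((1 / (Fintype.card (Matrix (Fin s) (Fin n) (ZMod 2)) : ℂ)) *
            ∑ X : Matrix (Fin s) (Fin n) (ZMod 2), (F X : ℂ) *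
              (-1 : ℂ) ^ (∑ i : Fin s, ∑ j : Fin n, (A i j).val * (X i j).val))
        ≤ M * (2 : ℝ) ^
            (-((∑ i : Fin s, ∑ j : Fin n,
                  ((j : ℕ) + 1 : ℤ) * (if A i j = 0 then 0 else 1)) +
               ∑ i : Fin s, ∑ j : Fin n, (if A i j = 0 then 0 else 1)))) :
    Real.sqrt
        ((1 / (Fintype.card (Matrix (Fin s) (Fin n) (ZMod 2)) : ℝ)) *
          ∑ σ : Matrix (Fin s) (Fin n) (ZMod 2),
            ((1 / ((Finset.univ.filter (· ∈ P)).card : ℝ)) *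
                (∑ X ∈ Finset.univ.filter (· ∈ P), F (X + σ)) -
              (1 / (Fintype.card (Matrix (Fin s) (Fin n) (ZMod 2)) : ℝ)) *
                ∑ X : Matrix (Fin s) (Fin n) (ZMod 2), F X) ^ 2)
      ≤ M *
        Real.sqrt
          (∑ A ∈ Finset.univ.filter
              (fun A : Matrix (Fin s) (Fin n) (ZMod 2) =>
                (∀ X ∈ P,
                  (-1 : ℂ) ^
                    (∑ i : Fin s, ∑ j : Fin n, (A i j).val * (X i j).val) = 1) ∧ A ≠ 0),
            (2 : ℝ) ^
              (-2 * ((∑ i : Fin s, ∑ j : Fin n,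
                  ((j : ℕ) + 1 : ℤ) * (if A i j = 0 then 0 else 1)) +
                ∑ i : Fin s, ∑ j : Fin n, (if A i j = 0 then 0 else 1)))) := by
  rw [Walsh.mean_sq_cosetAverage_sub_mean, Walsh.erase_zero_dual]
  refine Real.sqrt_sum_sq_le_mul_sqrt_sum_zpow hM fun A hA => ?_
  rw [← Real.norm_eq_abs, ← Complex.norm_real, Walsh.ofReal_coeff]
  exact hF A (mem_filter.1 hA).2.2
end
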